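/- arXiv:1306.2430 — 5 statements merged into one kernel-verified Lean document; each statement's English description precedes it below -/
import Mathlib

section
/- Let (Ω, 𝓕, P) be a probability space, d ≥ 1, and let F, G : Ω → ℝ^d be random vectors whose coordinates are all integrable. Assume that the random vectors G and F − G are independent, and that E[F_i] = E[G_i] for every i = 1, …, d. Then E[max_{1≤i≤d} F_i] ≥ E[max_{1≤i≤d} G_i]. -/
open MeasureTheory ProbabilityTheory

/-!
Write `F = G + H` with `H = F - G` independent of `G` and centred. By independence,
`E[max F] = ∫ E[max (g + H)] dP_G(g)`, and for each fixed `g` the maximum of the means of the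
coordinates `gᵢ + Hᵢ`, which is `max g`, is at most the mean of their maximum.
-/

namespace MeasureTheory

variable {α ι : Type*} [MeasurableSpace α] {μ : Measure α}

theorem Integrable.finset_sup'_apply (s : Finset ι) (hs : s.Nonempty) {f : ι → α → ℝ}
    (hf : ∀ i ∈ s, Integrable (f i) μ) : Integrable (fun a => s.sup' hs fun i => f i a) μ := by
  simpa only [← Finset.sup'_apply] using
    Finset.sup'_induction (p := fun g => Integrable g μ) hs f (fun _ hg _ hh => hg.sup hh) hf

theorem finset_sup'_integral_le_integral_sup' (s : Finset ι) (hs : s.Nonempty) {f : ι → α → ℝ}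
    (hf : ∀ i ∈ s, Integrable (f i) μ) :
    (s.sup' hs fun i => ∫ a, f i a ∂μ) ≤ ∫ a, s.sup' hs (fun i => f i a) ∂μ :=
  Finset.sup'_le _ _ fun i hi =>
    integral_mono (hf i hi) (Integrable.finset_sup'_apply s hs hf) fun a => Finset.le_sup' (fun i => f i a) hi

theorem Integrable.integral_conv_left {M : Type*} [AddMonoid M] [MeasurableSpace M]
    [MeasurableAdd₂ M] {μ ν : Measure M} [SFinite ν] {f : M → ℝ}
    (hf : Integrable f (μ ∗ ν)) : Integrable (fun x => ∫ y, f (x + y) ∂ν) μ := by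
  rw [Measure.conv, integrable_map_measure hf.1 (by fun_prop)] at hf
  exact hf.integral_prod_left

end MeasureTheory

theorem Finset.sup'_le_integral_sup'_add {ι : Type*} (s : Finset ι) (hs : s.Nonempty)
    [MeasurableSpace (ι → ℝ)] {ν : Measure (ι → ℝ)} [IsProbabilityMeasure ν]
    (hint : ∀ i ∈ s, Integrable (fun y => y i) ν) (hmean : ∀ i ∈ s, ∫ y, y i ∂ν = 0)
    (x : ι → ℝ) : s.sup' hs x ≤ ∫ y, s.sup' hs (x + y) ∂ν := by
  have hshift : ∀ i ∈ s, x i = ∫ y, (x + y) i ∂ν := fun i hi => by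
    simp [integral_add (integrable_const _) (hint i hi), hmean i hi]
  calc s.sup' hs x = s.sup' hs fun i => ∫ y, (x + y) i ∂ν := Finset.sup'_congr hs rfl hshift
    _ ≤ ∫ y, s.sup' hs (x + y) ∂ν :=
      finset_sup'_integral_le_integral_sup' s hs fun i hi => (integrable_const _).add (hint i hi)

namespace ProbabilityTheory

variable {Ω E : Type*} [MeasurableSpace Ω] {P : Measure Ω} [IsFiniteMeasure P]
  [AddMonoid E] [MeasurableSpace E] [MeasurableAdd₂ E]

theorem IndepFun.integral_comp_le_integral_comp_add {X Y : Ω → E} {Φ : E → ℝ}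
    (hX : AEMeasurable X P) (hY : AEMeasurable Y P) (hXY : IndepFun X Y P) (hΦ : Measurable Φ)
    (hΦX : Integrable (fun ω => Φ (X ω)) P) (hΦXY : Integrable (fun ω => Φ (X ω + Y ω)) P)
    (hsub : ∀ x, Φ x ≤ ∫ y, Φ (x + y) ∂(P.map Y)) :
    ∫ ω, Φ (X ω) ∂P ≤ ∫ ω, Φ (X ω + Y ω) ∂P := by
  have hconv : P.map (X + Y) = P.map X ∗ P.map Y := hXY.map_add_eq_map_conv_map₀ hX hY
  have hΦconv : Integrable Φ (P.map X ∗ P.map Y) := by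
    rwa [← hconv, integrable_map_measure hΦ.aestronglyMeasurable (hX.add hY)]
  calc ∫ ω, Φ (X ω) ∂P = ∫ x, Φ x ∂(P.map X) := (integral_map hX hΦ.aestronglyMeasurable).symm
    _ ≤ ∫ x, ∫ y, Φ (x + y) ∂(P.map Y) ∂(P.map X) :=
      integral_mono ((integrable_map_measure hΦ.aestronglyMeasurable hX).mpr hΦX)
        hΦconv.integral_conv_left hsub
    _ = ∫ z, Φ z ∂(P.map (X + Y)) := by rw [hconv, integral_conv hΦconv]
    _ = ∫ ω, Φ (X ω + Y ω) ∂P := integral_map (hX.add hY) hΦ.aestronglyMeasurable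

end ProbabilityTheory

theorem sad_prop_general {Ω : Type*} [MeasurableSpace Ω] (P : Measure Ω) [IsProbabilityMeasure P]
    (d : ℕ) (hd : 0 < d) (F G : Ω → Fin d → ℝ)
    (hFi : ∀ i, Integrable (fun ω => F ω i) P)
    (hGi : ∀ i, Integrable (fun ω => G ω i) P)
    (hindep : IndepFun G (fun ω => F ω - G ω) P)
    (hmean : ∀ i, ∫ ω, F ω i ∂P = ∫ ω, G ω i ∂P) :
    ∫ ω, Finset.univ.sup' ⟨⟨0, hd⟩, Finset.mem_univ _⟩ (fun i => F ω i) ∂P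
      ≥ ∫ ω, Finset.univ.sup' ⟨⟨0, hd⟩, Finset.mem_univ _⟩ (fun i => G ω i) ∂P := by
  set H := fun ω => F ω - G ω
  have hne : (Finset.univ : Finset (Fin d)).Nonempty := ⟨⟨0, hd⟩, Finset.mem_univ _⟩
  have hHi : ∀ i, Integrable (fun ω => H ω i) P := fun i => (hFi i).sub (hGi i)
  have hGm : AEMeasurable G P := aemeasurable_pi_lambda _ fun i => (hGi i).aemeasurable
  have hHm : AEMeasurable H P := aemeasurable_pi_lambda _ fun i => (hHi i).aemeasurable
  have hGH : ∀ ω, G ω + H ω = F ω := fun ω => add_sub_cancel (G ω) (F ω)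
  have hHmean : ∀ i, ∫ h, h i ∂(P.map H) = 0 := fun i => by
    rw [integral_map hHm (measurable_pi_apply i).aestronglyMeasurable]
    simp only [H, Pi.sub_apply, integral_sub (hFi i) (hGi i), hmean i, sub_self]
  have hHint : ∀ i, Integrable (fun h => h i) (P.map H) := fun i =>
    (integrable_map_measure (measurable_pi_apply i).aestronglyMeasurable hHm).mpr (hHi i)
  have := Measure.isProbabilityMeasure_map (μ := P) hHm
  simpa only [hGH] using hindep.integral_comp_le_integral_comp_add hGm hHm
    (Continuous.finset_sup'_apply hne fun i _ => continuous_apply i).measurable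
    (Integrable.finset_sup'_apply _ hne fun i _ => hGi i)
    (by simpa only [hGH] using Integrable.finset_sup'_apply _ hne fun i _ => hFi i)
    (Finset.sup'_le_integral_sup'_add _ hne (fun i _ => hHint i) fun i _ => hHmean i)

/-- Proposition 1.3 (sad-prop): if `G` and `F - G` are independent random vectors in `ℝ^d`
with integrable coordinates and `E[Fᵢ] = E[Gᵢ]` for every `i`, then
`E[max_i Fᵢ] ≥ E[max_i Gᵢ]`. -/
theorem sad_prop {Ω : Type*} [MeasurableSpace Ω] (P : Measure Ω) [IsProbabilityMeasure P]
    (d : ℕ) (hd : 0 < d) (F G : Ω → Fin d → ℝ)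
    (hFm : Measurable F) (hGm : Measurable G)
    (hFi : ∀ i, Integrable (fun ω => F ω i) P)
    (hGi : ∀ i, Integrable (fun ω => G ω i) P)
    (hindep : IndepFun G (fun ω => F ω - G ω) P)
    (hmean : ∀ i, ∫ ω, F ω i ∂P = ∫ ω, G ω i ∂P) :
    ∫ ω, Finset.univ.sup' ⟨⟨0, hd⟩, Finset.mem_univ _⟩ (fun i => F ω i) ∂P
      ≥ ∫ ω, Finset.univ.sup' ⟨⟨0, hd⟩, Finset.mem_univ _⟩ (fun i => G ω i) ∂P :=
  sad_prop_general P d hd F G hFi hGi hindep hmean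
end

section
/- Let F, G : Ω → ℝ^d be integrable centered random vectors on a probability space (Ω, 𝓕, P), and let (Γ^F, Γ^G) be a joint Stein pair without cross terms for (F, G). Let f : ℝ^d → ℝ be a C² function with bounded first and second partial derivatives. Assume that almost surely, for every x ∈ ℝ^d, Σ_{i,j=1}^d (Γ^F_{ij} − Γ^G_{ij}) (∂²f/∂x_i∂x_j)(x) ≥ 0. Then E[f(F)] ≥ E[f(G)]. -/
/-!
Interpolate between `G` and `F` along `Zₜ = sin t • F + cos t • G`, so that `Z₀ = G` and
`Z_{π/2} = F`. Differentiating under the integral,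
`d/dt E[f(Zₜ)] = E[∇f(Zₜ) · (cos t F - sin t G)]`. The Stein identities, applied to the test
functions `(x, y) ↦ ∂ᵢf(sin t x + cos t y)`, turn this into
`sin t cos t E[∑ᵢⱼ (ΓF - ΓG)ᵢⱼ ∂ᵢ∂ⱼf(Zₜ)]`, which is nonnegative for `t ∈ [0, π/2]`; hence
`t ↦ E[f(Zₜ)]` is monotone on `[0, π/2]`.
-/

open MeasureTheory ProbabilityTheory

/-- `(ΓF, ΓG)` is a joint Stein pair without cross terms for `(F, G)`: for every `C¹` test
function `h : ℝ^d × ℝ^d → ℝ` that is bounded with bounded derivative, the integration-by-parts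
identities `E[h(F,G) Fᵢ] = ∑ⱼ E[(∂h/∂xⱼ)(F,G) ΓFⱼᵢ]` and
`E[h(F,G) Gᵢ] = ∑ⱼ E[(∂h/∂yⱼ)(F,G) ΓGⱼᵢ]` hold, and the matrix entries are integrable. -/
def IsJointSteinPair {Ω : Type*} [MeasurableSpace Ω] (P : Measure Ω) {d : ℕ}
    (F G : Ω → Fin d → ℝ) (ΓF ΓG : Ω → Fin d → Fin d → ℝ) : Prop :=
  (∀ i j, Integrable (fun ω => ΓF ω i j) P) ∧
  (∀ i j, Integrable (fun ω => ΓG ω i j) P) ∧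
    ∀ h : (Fin d → ℝ) × (Fin d → ℝ) → ℝ, ContDiff ℝ 1 h → (∃ M, ∀ z, |h z| ≤ M) →
      (∃ M, ∀ z, ‖fderiv ℝ h z‖ ≤ M) →
      ∀ i,
        (∫ ω, h (F ω, G ω) * F ω i ∂P
            = ∑ j, ∫ ω, fderiv ℝ h (F ω, G ω) (Pi.single j 1, 0) * ΓF ω j i ∂P) ∧
        (∫ ω, h (F ω, G ω) * G ω i ∂P
            = ∑ j, ∫ ω, fderiv ℝ h (F ω, G ω) (0, Pi.single j 1) * ΓG ω j i ∂P)

open Real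

section Interpolation

variable {Ω E : Type*} [MeasurableSpace Ω] {P : Measure Ω}
  [NormedAddCommGroup E] [NormedSpace ℝ E] {f : E → ℝ} {C : ℝ}

theorem integrable_comp_of_norm_fderiv_le [IsFiniteMeasure P] (hf : Differentiable ℝ f)
    (hC : ∀ x, ‖fderiv ℝ f x‖ ≤ C) {X : Ω → E} (hX : Integrable X P) :
    Integrable (fun ω => f (X ω)) P := by
  refine ((integrable_const ‖f 0‖).add (hX.norm.const_mul C)).mono'
    (hf.continuous.comp_aestronglyMeasurable hX.1) (ae_of_all _ fun ω => ?_)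
  have hmvt : ‖f (X ω) - f 0‖ ≤ C * ‖X ω - 0‖ :=
    convex_univ.norm_image_sub_le_of_norm_fderiv_le (fun x _ => hf x) (fun x _ => hC x)
      (Set.mem_univ 0) (Set.mem_univ (X ω))
  rw [sub_zero] at hmvt
  exact (norm_le_norm_add_norm_sub' _ (f 0)).trans (add_le_add le_rfl hmvt)

theorem integrable_fderiv_apply (hf : Continuous (fderiv ℝ f)) (hC : ∀ x, ‖fderiv ℝ f x‖ ≤ C)
    {X Y : Ω → E} (hX : AEStronglyMeasurable X P) (hY : Integrable Y P) :
    Integrable (fun ω => fderiv ℝ f (X ω) (Y ω)) P := by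
  have hcont : Continuous fun p : E × E => fderiv ℝ f p.1 p.2 :=
    (hf.comp continuous_fst).clm_apply continuous_snd
  refine (hY.norm.const_mul C).mono' (hcont.comp_aestronglyMeasurable (hX.prodMk hY.1))
    (ae_of_all _ fun ω => ?_)
  exact ((fderiv ℝ f (X ω)).le_opNorm _).trans (by gcongr; exact hC _)

theorem hasDerivAt_sin_smul_add_cos_smul (x y : E) (t : ℝ) :
    HasDerivAt (fun s => sin s • x + cos s • y) (cos t • x - sin t • y) t :=
  (((hasDerivAt_sin t).smul_const x).add ((hasDerivAt_cos t).smul_const y)).congr_deriv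
    (by rw [neg_smul, ← sub_eq_add_neg])

theorem hasDerivAt_integral_comp_sin_smul_add_cos_smul [IsFiniteMeasure P] (hf : ContDiff ℝ 1 f)
    (hC : ∀ x, ‖fderiv ℝ f x‖ ≤ C) {F G : Ω → E} (hF : Integrable F P) (hG : Integrable G P)
    (t : ℝ) :
    HasDerivAt (fun s => ∫ ω, f (sin s • F ω + cos s • G ω) ∂P)
      (∫ ω, fderiv ℝ f (sin t • F ω + cos t • G ω)
        (cos t • F ω - sin t • G ω) ∂P) t := by
  have hZ (s : ℝ) : Integrable (fun ω => sin s • F ω + cos s • G ω) P :=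
    (hF.smul _).add (hG.smul _)
  have hfd : Differentiable ℝ f := hf.differentiable one_ne_zero
  have hC₀ : 0 ≤ C := (norm_nonneg _).trans (hC 0)
  refine (hasDerivAt_integral_of_dominated_loc_of_deriv_le Filter.univ_mem
    (.of_forall fun s => (integrable_comp_of_norm_fderiv_le hfd hC (hZ s)).1)
    (integrable_comp_of_norm_fderiv_le hfd hC (hZ t))
    (integrable_fderiv_apply (hf.continuous_fderiv one_ne_zero) hC (hZ t).1
      ((hF.smul _).sub (hG.smul _))).1
    (bound := fun ω => C * (‖F ω‖ + ‖G ω‖)) (ae_of_all _ fun ω s _ => ?_)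
    ((hF.norm.add hG.norm).const_mul C)
    (ae_of_all _ fun ω s _ => (hfd _).hasFDerivAt.comp_hasDerivAt s
      (hasDerivAt_sin_smul_add_cos_smul _ _ s))).2
  calc _ ≤ C * ‖cos s • F ω - sin s • G ω‖ :=
        ((fderiv ℝ f _).le_opNorm _).trans (by gcongr; exact hC _)
    _ ≤ C * (‖F ω‖ + ‖G ω‖) := by
        gcongr
        refine (norm_sub_le _ _).trans (add_le_add ?_ ?_) <;> rw [norm_smul] <;>
          exact mul_le_of_le_one_left (norm_nonneg _)
            (by simp [abs_cos_le_one, abs_sin_le_one])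

end Interpolation

section SteinTestFunction

variable {E : Type*} [NormedAddCommGroup E] [NormedSpace ℝ E] {f : E → ℝ}

theorem norm_fderiv_fderiv (x : E) :
    ‖fderiv ℝ (fderiv ℝ f) x‖ = ‖iteratedFDeriv ℝ 2 f x‖ := by
  rw [← norm_iteratedFDeriv_one, norm_iteratedFDeriv_fderiv]

theorem contDiff_fderiv_apply_smul_add_smul (hf : ContDiff ℝ 2 f) (a b : ℝ) (v : E) :
    ContDiff ℝ 1 fun p : E × E => fderiv ℝ f (a • p.1 + b • p.2) v :=
  ((hf.fderiv_right (by norm_num)).comp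
    ((contDiff_fst.const_smul a).add (contDiff_snd.const_smul b))).clm_apply contDiff_const

theorem hasFDerivAt_fderiv_apply_smul_add_smul (hf : ContDiff ℝ 2 f) (a b : ℝ) (v : E)
    (q : E × E) :
    HasFDerivAt (fun p : E × E => fderiv ℝ f (a • p.1 + b • p.2) v)
      ((ContinuousLinearMap.apply ℝ ℝ v).comp ((fderiv ℝ (fderiv ℝ f) (a • q.1 + b • q.2)).comp
        (a • ContinuousLinearMap.fst ℝ E E + b • ContinuousLinearMap.snd ℝ E E))) q := by
  have hf' : Differentiable ℝ (fderiv ℝ f) :=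
    (hf.fderiv_right (by norm_num)).differentiable one_ne_zero
  exact (ContinuousLinearMap.apply ℝ ℝ v).hasFDerivAt.comp q ((hf' _).hasFDerivAt.comp q
    (a • ContinuousLinearMap.fst ℝ E E + b • ContinuousLinearMap.snd ℝ E E).hasFDerivAt)

theorem fderiv_fderiv_apply_smul_add_smul (hf : ContDiff ℝ 2 f) (a b : ℝ) (v : E)
    (q w : E × E) :
    fderiv ℝ (fun p : E × E => fderiv ℝ f (a • p.1 + b • p.2) v) q w
      = fderiv ℝ (fderiv ℝ f) (a • q.1 + b • q.2) (a • w.1 + b • w.2) v := by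
  rw [(hasFDerivAt_fderiv_apply_smul_add_smul hf a b v q).fderiv]
  rfl

theorem norm_fderiv_fderiv_apply_smul_add_smul_le (hf : ContDiff ℝ 2 f) {M : ℝ}
    (hM : ∀ x, ‖iteratedFDeriv ℝ 2 f x‖ ≤ M) (a b : ℝ) (v : E) (q : E × E) :
    ‖fderiv ℝ (fun p : E × E => fderiv ℝ f (a • p.1 + b • p.2) v) q‖
      ≤ ‖v‖ * (M * ‖a • ContinuousLinearMap.fst ℝ E E + b • ContinuousLinearMap.snd ℝ E E‖) := by
  rw [(hasFDerivAt_fderiv_apply_smul_add_smul hf a b v q).fderiv]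
  refine (ContinuousLinearMap.opNorm_comp_le _ _).trans (mul_le_mul ?_
    ((ContinuousLinearMap.opNorm_comp_le _ _).trans ?_) (norm_nonneg _) (norm_nonneg _))
  · exact ContinuousLinearMap.opNorm_le_bound _ (norm_nonneg _) fun T => by
      rw [mul_comm]; exact T.le_opNorm v
  · gcongr
    rw [norm_fderiv_fderiv]
    exact hM _

end SteinTestFunction

section Hessian

variable {Ω : Type*} [MeasurableSpace Ω] {P : Measure Ω} {d : ℕ} {f : (Fin d → ℝ) → ℝ}

noncomputable def hessianPairing (A : Fin d → Fin d → ℝ) (f : (Fin d → ℝ) → ℝ)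
    (x : Fin d → ℝ) : ℝ :=
  ∑ i, ∑ j, A i j * iteratedFDeriv ℝ 2 f x ![Pi.single i 1, Pi.single j 1]

theorem hessianPairing_sub (A B : Fin d → Fin d → ℝ) (x : Fin d → ℝ) :
    hessianPairing (A - B) f x = hessianPairing A f x - hessianPairing B f x := by
  simp only [hessianPairing, ← Finset.sum_sub_distrib, Pi.sub_apply, sub_mul]

theorem norm_iteratedFDeriv_two_single_le {M : ℝ} (hM : ∀ x, ‖iteratedFDeriv ℝ 2 f x‖ ≤ M)
    (x : Fin d → ℝ) (i j : Fin d) :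
    ‖iteratedFDeriv ℝ 2 f x ![Pi.single i 1, Pi.single j 1]‖ ≤ M := by
  refine ((iteratedFDeriv ℝ 2 f x).le_opNorm _).trans ?_
  simpa [Fin.prod_univ_two, Pi.norm_single] using hM x

theorem integrable_iteratedFDeriv_two_single_mul (hf : ContDiff ℝ 2 f) {M : ℝ}
    (hM : ∀ x, ‖iteratedFDeriv ℝ 2 f x‖ ≤ M) {X : Ω → Fin d → ℝ} (hX : AEStronglyMeasurable X P)
    {g : Ω → ℝ} (hg : Integrable g P) (i j : Fin d) :
    Integrable (fun ω => iteratedFDeriv ℝ 2 f (X ω) ![Pi.single i 1, Pi.single j 1] * g ω) P :=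
  hg.bdd_mul (((continuous_eval_const _).comp (hf.continuous_iteratedFDeriv le_rfl))
      |>.comp_aestronglyMeasurable hX)
    (ae_of_all _ fun _ => norm_iteratedFDeriv_two_single_le hM _ i j)

theorem integral_hessianPairing_eq_sum (hf : ContDiff ℝ 2 f) {M : ℝ}
    (hM : ∀ x, ‖iteratedFDeriv ℝ 2 f x‖ ≤ M) {X : Ω → Fin d → ℝ} (hX : AEStronglyMeasurable X P)
    {A : Ω → Fin d → Fin d → ℝ} (hA : ∀ i j, Integrable (fun ω => A ω i j) P) :
    ∫ ω, hessianPairing (A ω) f (X ω) ∂P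
      = ∑ i, ∑ j,
          ∫ ω, iteratedFDeriv ℝ 2 f (X ω) ![Pi.single i 1, Pi.single j 1] * A ω i j ∂P := by
  have hint (i j : Fin d) := integrable_iteratedFDeriv_two_single_mul hf hM hX (hA i j) i j
  simp only [hessianPairing, mul_comm (A _ _ _)]
  rw [integral_finsetSum _ fun i _ => integrable_finsetSum _ fun j _ => hint i j]
  exact Finset.sum_congr rfl fun i _ => integral_finsetSum _ fun j _ => hint i j

theorem integrable_hessianPairing (hf : ContDiff ℝ 2 f) {M : ℝ}
    (hM : ∀ x, ‖iteratedFDeriv ℝ 2 f x‖ ≤ M) {X : Ω → Fin d → ℝ} (hX : AEStronglyMeasurable X P)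
    {A : Ω → Fin d → Fin d → ℝ} (hA : ∀ i j, Integrable (fun ω => A ω i j) P) :
    Integrable (fun ω => hessianPairing (A ω) f (X ω)) P := by
  simp only [hessianPairing, mul_comm (A _ _ _)]
  exact integrable_finsetSum _ fun i _ => integrable_finsetSum _ fun j _ =>
    integrable_iteratedFDeriv_two_single_mul hf hM hX (hA i j) i j

theorem integral_fderiv_apply_eq_sum (hf : ContDiff ℝ 1 f) {M : ℝ}
    (hM : ∀ x, ‖fderiv ℝ f x‖ ≤ M) {X Y : Ω → Fin d → ℝ} (hX : AEStronglyMeasurable X P)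
    (hY : ∀ i, Integrable (fun ω => Y ω i) P) :
    ∫ ω, fderiv ℝ f (X ω) (Y ω) ∂P
      = ∑ i, ∫ ω, fderiv ℝ f (X ω) (Pi.single i 1) * Y ω i ∂P := by
  have hexpand (T : (Fin d → ℝ) →L[ℝ] ℝ) (y : Fin d → ℝ) :
      T y = ∑ i, T (Pi.single i 1) * y i := by
    conv_lhs => rw [← Finset.univ_sum_single y, map_sum]
    refine Finset.sum_congr rfl fun i _ => ?_
    rw [mul_comm, ← smul_eq_mul, ← map_smul, ← Pi.single_smul', smul_eq_mul, mul_one]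
  conv_lhs => enter [2, ω]; rw [hexpand]
  exact integral_finsetSum _ fun i _ => (hY i).bdd_mul (c := M)
    (((continuous_eval_const _).comp (hf.continuous_fderiv one_ne_zero))
      |>.comp_aestronglyMeasurable hX)
    (ae_of_all _ fun ω => ((fderiv ℝ f (X ω)).le_opNorm _).trans
      (by simpa [Pi.norm_single] using hM (X ω)))

end Hessian

section SteinIdentity

variable {Ω : Type*} [MeasurableSpace Ω] {P : Measure Ω} {d : ℕ} {F G : Ω → Fin d → ℝ}
  {ΓF ΓG : Ω → Fin d → Fin d → ℝ} {f : (Fin d → ℝ) → ℝ} {M₁ M₂ : ℝ}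

theorem IsJointSteinPair.integral_fderiv_single_mul (hstein : IsJointSteinPair P F G ΓF ΓG)
    (hf : ContDiff ℝ 2 f) (hM₁ : ∀ x, ‖fderiv ℝ f x‖ ≤ M₁)
    (hM₂ : ∀ x, ‖iteratedFDeriv ℝ 2 f x‖ ≤ M₂) (a b : ℝ) (i : Fin d) :
    ∫ ω, fderiv ℝ f (a • F ω + b • G ω) (Pi.single i 1) * F ω i ∂P
        = a * ∑ j, ∫ ω, iteratedFDeriv ℝ 2 f (a • F ω + b • G ω)
            ![Pi.single j 1, Pi.single i 1] * ΓF ω j i ∂P ∧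
      ∫ ω, fderiv ℝ f (a • F ω + b • G ω) (Pi.single i 1) * G ω i ∂P
        = b * ∑ j, ∫ ω, iteratedFDeriv ℝ 2 f (a • F ω + b • G ω)
            ![Pi.single j 1, Pi.single i 1] * ΓG ω j i ∂P := by
  have hbdd : ∃ M, ∀ z : (Fin d → ℝ) × (Fin d → ℝ),
      |fderiv ℝ f (a • z.1 + b • z.2) (Pi.single i 1)| ≤ M :=
    ⟨M₁, fun z => ((fderiv ℝ f _).le_opNorm _).trans (by simpa [Pi.norm_single] using hM₁ _)⟩
  obtain ⟨hFi, hGi⟩ := hstein.2.2 _ (contDiff_fderiv_apply_smul_add_smul hf a b _) hbdd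
    ⟨_, norm_fderiv_fderiv_apply_smul_add_smul_le hf hM₂ a b _⟩ i
  simp only [fderiv_fderiv_apply_smul_add_smul hf] at hFi hGi
  refine ⟨hFi.trans ?_, hGi.trans ?_⟩ <;> rw [Finset.mul_sum] <;>
    refine Finset.sum_congr rfl fun j _ => ?_ <;> rw [← integral_const_mul] <;>
    congr 1 <;> ext ω <;> simp [iteratedFDeriv_two_apply, mul_assoc]

theorem IsJointSteinPair.integral_fderiv_apply (hstein : IsJointSteinPair P F G ΓF ΓG)
    (hf : ContDiff ℝ 2 f) (hM₁ : ∀ x, ‖fderiv ℝ f x‖ ≤ M₁)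
    (hM₂ : ∀ x, ‖iteratedFDeriv ℝ 2 f x‖ ≤ M₂) (hF : ∀ i, Integrable (fun ω => F ω i) P)
    (hG : ∀ i, Integrable (fun ω => G ω i) P) (a b : ℝ) :
    ∫ ω, fderiv ℝ f (a • F ω + b • G ω) (F ω) ∂P
        = a * ∫ ω, hessianPairing (ΓF ω) f (a • F ω + b • G ω) ∂P ∧
      ∫ ω, fderiv ℝ f (a • F ω + b • G ω) (G ω) ∂P
        = b * ∫ ω, hessianPairing (ΓG ω) f (a • F ω + b • G ω) ∂P := by
  have hZ : AEStronglyMeasurable (fun ω => a • F ω + b • G ω) P :=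
    (((Integrable.of_eval hF).smul a).add ((Integrable.of_eval hG).smul b)).1
  have hf₁ : ContDiff ℝ 1 f := hf.of_le (by norm_num)
  rw [integral_fderiv_apply_eq_sum hf₁ hM₁ hZ hF, integral_fderiv_apply_eq_sum hf₁ hM₁ hZ hG,
    integral_hessianPairing_eq_sum hf hM₂ hZ hstein.1,
    integral_hessianPairing_eq_sum hf hM₂ hZ hstein.2.1,
    Finset.sum_comm, Finset.mul_sum, Finset.sum_comm (γ := Fin d), Finset.mul_sum]
  exact ⟨Finset.sum_congr rfl fun i _ => (hstein.integral_fderiv_single_mul hf hM₁ hM₂ a b i).1,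
    Finset.sum_congr rfl fun i _ => (hstein.integral_fderiv_single_mul hf hM₁ hM₂ a b i).2⟩

theorem IsJointSteinPair.integral_fderiv_apply_cos_smul_sub_sin_smul
    (hstein : IsJointSteinPair P F G ΓF ΓG) (hf : ContDiff ℝ 2 f)
    (hM₁ : ∀ x, ‖fderiv ℝ f x‖ ≤ M₁) (hM₂ : ∀ x, ‖iteratedFDeriv ℝ 2 f x‖ ≤ M₂)
    (hF : ∀ i, Integrable (fun ω => F ω i) P) (hG : ∀ i, Integrable (fun ω => G ω i) P) (t : ℝ) :
    ∫ ω, fderiv ℝ f (sin t • F ω + cos t • G ω) (cos t • F ω - sin t • G ω) ∂P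
      = sin t * cos t * ∫ ω, hessianPairing (ΓF ω - ΓG ω) f (sin t • F ω + cos t • G ω) ∂P := by
  obtain ⟨hFF, hGG⟩ := hstein.integral_fderiv_apply hf hM₁ hM₂ hF hG (sin t) (cos t)
  have hZ : AEStronglyMeasurable (fun ω => sin t • F ω + cos t • G ω) P :=
    (((Integrable.of_eval hF).smul (sin t)).add ((Integrable.of_eval hG).smul (cos t))).1
  have hfc : Continuous (fderiv ℝ f) := hf.continuous_fderiv (by norm_num)
  simp only [map_sub, map_smul, smul_eq_mul, hessianPairing_sub]
  rw [integral_sub ((integrable_fderiv_apply hfc hM₁ hZ (Integrable.of_eval hF)).const_mul _)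
      ((integrable_fderiv_apply hfc hM₁ hZ (Integrable.of_eval hG)).const_mul _),
    integral_sub (integrable_hessianPairing hf hM₂ hZ hstein.1)
      (integrable_hessianPairing hf hM₂ hZ hstein.2.1),
    integral_const_mul, integral_const_mul, hFF, hGG]
  ring

end SteinIdentity

theorem gs_thm_general {Ω : Type*} [MeasurableSpace Ω] (P : Measure Ω) [IsProbabilityMeasure P]
    (d : ℕ) (F G : Ω → Fin d → ℝ)
    (hFi : ∀ i, Integrable (fun ω => F ω i) P)
    (hGi : ∀ i, Integrable (fun ω => G ω i) P)
    (ΓF ΓG : Ω → Fin d → Fin d → ℝ)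
    (hstein : IsJointSteinPair P F G ΓF ΓG)
    (f : (Fin d → ℝ) → ℝ) (hf : ContDiff ℝ 2 f)
    (hf1 : ∃ M, ∀ x, ‖fderiv ℝ f x‖ ≤ M)
    (hf2 : ∃ M, ∀ x, ‖iteratedFDeriv ℝ 2 f x‖ ≤ M)
    (hcond : ∀ᵐ ω ∂P, ∀ x : Fin d → ℝ,
      0 ≤ ∑ i, ∑ j, (ΓF ω i j - ΓG ω i j)
            * iteratedFDeriv ℝ 2 f x ![Pi.single i 1, Pi.single j 1]) :
    ∫ ω, f (F ω) ∂P ≥ ∫ ω, f (G ω) ∂P := by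
  obtain ⟨M₁, hM₁⟩ := hf1
  obtain ⟨M₂, hM₂⟩ := hf2
  have hpair : ∀ᵐ ω ∂P, ∀ x, 0 ≤ hessianPairing (ΓF ω - ΓG ω) f x := hcond
  set φ := fun s => ∫ ω, f (sin s • F ω + cos s • G ω) ∂P
  have hφ (t : ℝ) : HasDerivAt φ (sin t * cos t *
      ∫ ω, hessianPairing (ΓF ω - ΓG ω) f (sin t • F ω + cos t • G ω) ∂P) t := by
    rw [← hstein.integral_fderiv_apply_cos_smul_sub_sin_smul hf hM₁ hM₂ hFi hGi t]
    exact hasDerivAt_integral_comp_sin_smul_add_cos_smul (hf.of_le (by norm_num)) hM₁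
      (Integrable.of_eval hFi) (Integrable.of_eval hGi) t
  have hmono : MonotoneOn φ (Set.Icc 0 (π / 2)) := by
    refine monotoneOn_of_hasDerivWithinAt_nonneg (convex_Icc _ _)
      (fun t _ => (hφ t).continuousAt.continuousWithinAt) (fun t _ => (hφ t).hasDerivWithinAt)
      fun t ht => ?_
    rw [interior_Icc] at ht
    have hsin : 0 ≤ sin t := sin_nonneg_of_nonneg_of_le_pi ht.1.le (by linarith [ht.2, pi_pos])
    have hcos : 0 ≤ cos t := cos_nonneg_of_mem_Icc ⟨by linarith [ht.1, pi_pos], ht.2.le⟩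
    exact mul_nonneg (mul_nonneg hsin hcos) (integral_nonneg_of_ae (hpair.mono fun ω hω => hω _))
  simpa [φ] using hmono (Set.left_mem_Icc.2 pi_div_two_pos.le)
    (Set.right_mem_Icc.2 pi_div_two_pos.le) pi_div_two_pos.le

/-- Theorem 3.1 (gs-thm), Slepian-type inequality on Wiener space: if `(ΓF, ΓG)` is a joint
Stein pair without cross terms for the centered integrable vectors `(F, G)`, `f : ℝ^d → ℝ` is
`C²` with bounded first and second derivatives, and a.s.
`∑ᵢⱼ (ΓFᵢⱼ - ΓGᵢⱼ) (∂²f/∂xᵢ∂xⱼ)(x) ≥ 0` for every `x`, then `E[f(F)] ≥ E[f(G)]`. -/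
theorem gs_thm {Ω : Type*} [MeasurableSpace Ω] (P : Measure Ω) [IsProbabilityMeasure P]
    (d : ℕ) (F G : Ω → Fin d → ℝ)
    (hFm : Measurable F) (hGm : Measurable G)
    (hFi : ∀ i, Integrable (fun ω => F ω i) P)
    (hGi : ∀ i, Integrable (fun ω => G ω i) P)
    (hFc : ∀ i, ∫ ω, F ω i ∂P = 0) (hGc : ∀ i, ∫ ω, G ω i ∂P = 0)
    (ΓF ΓG : Ω → Fin d → Fin d → ℝ)
    (hstein : IsJointSteinPair P F G ΓF ΓG)
    (f : (Fin d → ℝ) → ℝ) (hf : ContDiff ℝ 2 f)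
    (hf1 : ∃ M, ∀ x, ‖fderiv ℝ f x‖ ≤ M)
    (hf2 : ∃ M, ∀ x, ‖iteratedFDeriv ℝ 2 f x‖ ≤ M)
    (hcond : ∀ᵐ ω ∂P, ∀ x : Fin d → ℝ,
      0 ≤ ∑ i, ∑ j, (ΓF ω i j - ΓG ω i j)
            * iteratedFDeriv ℝ 2 f x ![Pi.single i 1, Pi.single j 1]) :
    ∫ ω, f (F ω) ∂P ≥ ∫ ω, f (G ω) ∂P :=
  gs_thm_general P d F G hFi hGi ΓF ΓG hstein f hf hf1 hf2 hcond
end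

section
/- Let C be a symmetric positive semidefinite d×d real matrix with operator norm ‖C‖_op > 0, and let G be a random vector in ℝ^d whose law is the centered multivariate Gaussian measure with covariance matrix C. Then for all x_1, …, x_d ≥ 0, P[G_1 ≥ x_1, …, G_d ≥ x_d] ≤ exp(−(x_1² + … + x_d²)/(2 ‖C‖_op)). -/
open MeasureTheory ProbabilityTheory

/-- `μ` is the centered multivariate Gaussian measure on `ℝ^d` with covariance matrix `C`:
it is a probability measure under which every linear functional `x ↦ ⟨θ, x⟩` has a centered
real Gaussian law with variance `θᵀ C θ`. -/
def IsCenteredGaussianWithCov {d : ℕ} (μ : Measure (Fin d → ℝ))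
    (C : Matrix (Fin d) (Fin d) ℝ) : Prop :=
  IsProbabilityMeasure μ ∧
    ∀ θ : Fin d → ℝ,
      μ.map (fun x => ∑ i, θ i * x i) =
        gaussianReal 0 (Real.toNNReal (∑ i, ∑ j, θ i * C i j * θ j))

/-- The operator norm of a `d × d` real matrix acting on Euclidean space `ℝ^d`. -/
noncomputable def matrixOpNorm {d : ℕ} (C : Matrix (Fin d) (Fin d) ℝ) : ℝ :=
  ‖LinearMap.toContinuousLinearMap (Matrix.toEuclideanLin C)‖

/-! For `θ ≥ 0` coordinatewise, the orthant `{G ≥ x}` lies in the half-space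
`{⟨θ, G⟩ ≥ ⟨θ, x⟩}`. The functional `⟨θ, G⟩` is centered Gaussian with variance
`θᵀ C θ ≤ ‖C‖_op ‖θ‖²`, so Chernoff's bound gives `exp (-⟨θ, x⟩ + ‖C‖_op ‖θ‖² / 2)`, which is
smallest at `θ = x / ‖C‖_op`. -/

open scoped NNReal

theorem measureReal_ge_le_exp_of_map_eq_gaussianReal {Ω : Type*} [MeasurableSpace Ω]
    {P : Measure Ω} [IsFiniteMeasure P] {Y : Ω → ℝ} {μ : ℝ} {v : ℝ≥0}
    (hY : P.map Y = gaussianReal μ v) {t : ℝ} (ht : 0 ≤ t) (a : ℝ) :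
    P.real {ω | a ≤ Y ω} ≤ Real.exp (-t * a + μ * t + v * t ^ 2 / 2) := by
  have hYm : AEMeasurable Y P := aemeasurable_of_map_neZero (by rw [hY]; infer_instance)
  have hint : Integrable (fun ω => Real.exp (t * Y ω)) P := by
    have h := integrable_exp_mul_gaussianReal (μ := μ) (v := v) t
    rw [← hY] at h
    exact (integrable_map_measure (by fun_prop) hYm).mp h
  calc P.real {ω | a ≤ Y ω} ≤ Real.exp (-t * a) * mgf Y P t :=
      measure_ge_le_exp_mul_mgf a ht hint
    _ = _ := by rw [mgf_gaussianReal hY, ← Real.exp_add, add_assoc]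

theorem sum_mul_mul_le_matrixOpNorm_mul_sum_sq {d : ℕ} (C : Matrix (Fin d) (Fin d) ℝ)
    (θ : Fin d → ℝ) : ∑ i, ∑ j, θ i * C i j * θ j ≤ matrixOpNorm C * ∑ i, θ i ^ 2 := by
  set L := LinearMap.toContinuousLinearMap (Matrix.toEuclideanLin C)
  set u : EuclideanSpace ℝ (Fin d) := WithLp.toLp 2 θ
  have hquad : ∑ i, ∑ j, θ i * C i j * θ j = inner ℝ u (L u) := by
    simp [u, L, EuclideanSpace.inner_toLp_toLp, Matrix.toLpLin_toLp, dotProduct, Matrix.mulVec,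
      Finset.mul_sum, mul_comm, mul_left_comm]
  have hnorm : ‖u‖ ^ 2 = ∑ i, θ i ^ 2 := by
    simp [u, EuclideanSpace.norm_sq_eq]
  calc ∑ i, ∑ j, θ i * C i j * θ j = inner ℝ u (L u) := hquad
    _ ≤ ‖u‖ * (‖L‖ * ‖u‖) :=
      (real_inner_le_norm u (L u)).trans (by gcongr; exact L.le_opNorm u)
    _ = matrixOpNorm C * ∑ i, θ i ^ 2 := by rw [← hnorm, matrixOpNorm]; ring

theorem measureReal_orthant_le_of_isCenteredGaussianWithCov {Ω : Type*} [MeasurableSpace Ω]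
    {P : Measure Ω} [IsFiniteMeasure P] {d : ℕ} {G : Ω → Fin d → ℝ} (hGm : Measurable G)
    {C : Matrix (Fin d) (Fin d) ℝ} (hG : IsCenteredGaussianWithCov (P.map G) C)
    (x θ : Fin d → ℝ) (hθ : ∀ i, 0 ≤ θ i) :
    P.real {ω | ∀ i, x i ≤ G ω i}
      ≤ Real.exp (-∑ i, θ i * x i + matrixOpNorm C * (∑ i, θ i ^ 2) / 2) := by
  set Y : Ω → ℝ := fun ω => ∑ i, θ i * G ω i
  have hY : P.map Y = gaussianReal 0 (∑ i, ∑ j, θ i * C i j * θ j).toNNReal := by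
    rw [← hG.2 θ, Measure.map_map (by fun_prop) hGm]
    rfl
  have hsub : {ω | ∀ i, x i ≤ G ω i} ⊆ {ω | ∑ i, θ i * x i ≤ Y ω} := fun ω hω =>
    Finset.sum_le_sum fun i _ => mul_le_mul_of_nonneg_left (hω i) (hθ i)
  have hvar : ((∑ i, ∑ j, θ i * C i j * θ j).toNNReal : ℝ) ≤ matrixOpNorm C * ∑ i, θ i ^ 2 :=
    max_le (sum_mul_mul_le_matrixOpNorm_mul_sum_sq C θ)
      (mul_nonneg (norm_nonneg _) (Finset.sum_nonneg fun i _ => sq_nonneg _))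
  calc P.real {ω | ∀ i, x i ≤ G ω i} ≤ P.real {ω | ∑ i, θ i * x i ≤ Y ω} :=
      measureReal_mono hsub
    _ ≤ _ := measureReal_ge_le_exp_of_map_eq_gaussianReal hY zero_le_one _
    _ ≤ _ := by rw [Real.exp_le_exp]; linarith

theorem cop_gaussian_general {Ω : Type*} [MeasurableSpace Ω] (P : Measure Ω) [IsProbabilityMeasure P]
    (d : ℕ) (G : Ω → Fin d → ℝ) (hGm : Measurable G)
    (C : Matrix (Fin d) (Fin d) ℝ) (hCop : 0 < matrixOpNorm C)
    (hGlaw : IsCenteredGaussianWithCov (P.map G) C)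
    (x : Fin d → ℝ) (hx : ∀ i, 0 ≤ x i) :
    (P {ω | ∀ i, x i ≤ G ω i}).toReal
      ≤ Real.exp (-(∑ i, x i ^ 2) / (2 * matrixOpNorm C)) := by
  set N := matrixOpNorm C
  have hbound := measureReal_orthant_le_of_isCenteredGaussianWithCov hGm hGlaw x
    (fun i => x i / N) fun i => div_nonneg (hx i) hCop.le
  have hexponent : -∑ i, x i / N * x i + N * (∑ i, (x i / N) ^ 2) / 2
      = -(∑ i, x i ^ 2) / (2 * N) := by
    simp only [div_mul_eq_mul_div, div_pow, ← Finset.sum_div, ← sq]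
    field_simp
    ring
  rwa [hexponent] at hbound

/-- The Gaussian instance of Corollary 3.4 (Cop-thm): if `G` is a centered Gaussian vector
in `ℝ^d` with covariance matrix `C`, `C` symmetric positive semidefinite with `‖C‖_op > 0`,
then for all `x₁, …, x_d ≥ 0`,
`P[G₁ ≥ x₁, …, G_d ≥ x_d] ≤ exp(-(x₁² + ⋯ + x_d²)/(2‖C‖_op))`. -/
theorem cop_gaussian {Ω : Type*} [MeasurableSpace Ω] (P : Measure Ω) [IsProbabilityMeasure P]
    (d : ℕ) (G : Ω → Fin d → ℝ) (hGm : Measurable G)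
    (C : Matrix (Fin d) (Fin d) ℝ) (hC : C.PosSemidef) (hCop : 0 < matrixOpNorm C)
    (hGlaw : IsCenteredGaussianWithCov (P.map G) C)
    (x : Fin d → ℝ) (hx : ∀ i, 0 ≤ x i) :
    (P {ω | ∀ i, x i ≤ G ω i}).toReal
      ≤ Real.exp (-(∑ i, x i ^ 2) / (2 * matrixOpNorm C)) :=
  cop_gaussian_general P d G hGm C hCop hGlaw x hx
end

section
/- Let p ≥ 2 be a real number, F : Ω → ℝ a centered random variable with E[|F|^p] < ∞, and Γ : Ω → ℝ a random variable with E[|Γ|^{p/2}] < ∞ and E[|F|^{p−2}|Γ|] < ∞. Assume the integration-by-parts identity E[|F|^p] = (p−1) E[|F|^{p−2} Γ] holds (with the convention |F|^0 = 1 when p = 2). Then E[|F|^p] ≤ (p−1)^{p/2} E[|Γ|^{p/2}]. -/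
/-!
Write `A = E[|F|^p]` and `B = E[|Γ|^{p/2}]`. By the integration-by-parts identity and Hölder's
inequality with exponents `p/(p-2)` and `p/2`,
`A ≤ (p-1) E[|F|^{p-2} |Γ|] ≤ (p-1) A^{1-2/p} B^{2/p}`,
and dividing by `A^{1-2/p}` (when `A > 0`) gives `A^{2/p} ≤ (p-1) B^{2/p}`.
-/

open MeasureTheory

section

variable {α : Type*} [MeasurableSpace α] {μ : Measure α}

theorem aestronglyMeasurable_of_rpow {f : α → ℝ} {p : ℝ} (hf : 0 ≤ f) (hp : p ≠ 0)
    (hfp : AEStronglyMeasurable (fun x => f x ^ p) μ) : AEStronglyMeasurable f μ := by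
  have h := (hfp.aemeasurable.pow_const p⁻¹).aestronglyMeasurable
  simpa only [Real.rpow_rpow_inv (hf _) hp] using h

theorem memLp_ofReal_of_integrable_rpow {f : α → ℝ} {p : ℝ} (hf : 0 ≤ f) (hp : 0 < p)
    (hfp : Integrable (fun x => f x ^ p) μ) : MemLp f (ENNReal.ofReal p) μ := by
  refine (integrable_norm_rpow_iff (aestronglyMeasurable_of_rpow hf hp.ne' hfp.1)
    (by simpa using hp) ENNReal.ofReal_ne_top).1 ?_
  simpa only [ENNReal.toReal_ofReal hp.le, Real.norm_of_nonneg (hf _)] using hfp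

theorem integral_rpow_sub_mul_le {f g : α → ℝ} {p q : ℝ} (hq : 0 < q) (hqp : q ≤ p)
    (hf : 0 ≤ f) (hg : 0 ≤ g) (hfp : Integrable (fun x => f x ^ p) μ)
    (hgp : Integrable (fun x => g x ^ (p / q)) μ) :
    ∫ x, f x ^ (p - q) * g x ∂μ ≤
      (∫ x, f x ^ p ∂μ) ^ (1 - q / p) * (∫ x, g x ^ (p / q) ∂μ) ^ (q / p) := by
  have hp : 0 < p := hq.trans_le hqp
  rcases hqp.eq_or_lt with rfl | hqp
  · -- the Hölder exponent `p/(p-q)` is infinite, but both sides are `∫ g`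
    simp [div_self hp.ne']
  have hθ : 0 < q / p := div_pos hq hp
  have hθ1 : q / p < 1 := (div_lt_one hp).2 hqp
  have hpq : (1 - q / p)⁻¹.HolderConjugate (q / p)⁻¹ :=
    Real.HolderConjugate.one_sub_inv_inv hθ hθ1
  have hpow : ∀ x, (f x ^ (p - q)) ^ (1 - q / p)⁻¹ = f x ^ p := fun x => by
    rw [← Real.rpow_mul (hf x)]
    congr 1
    field_simp
  have hf' : MemLp (fun x => f x ^ (p - q)) (ENNReal.ofReal (1 - q / p)⁻¹) μ :=
    memLp_ofReal_of_integrable_rpow (fun x => Real.rpow_nonneg (hf x) _) hpq.pos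
      (by simpa only [hpow] using hfp)
  have hg' : MemLp g (ENNReal.ofReal (q / p)⁻¹) μ :=
    memLp_ofReal_of_integrable_rpow hg hpq.symm.pos (by rwa [inv_div])
  simpa only [hpow, one_div, inv_inv, inv_div] using
    integral_mul_le_Lp_mul_Lq_of_nonneg hpq (.of_forall fun x => Real.rpow_nonneg (hf x) _)
      (.of_forall hg) hf' hg'

end

theorem le_rpow_inv_mul_of_le_mul_rpow_mul_rpow {A B c θ : ℝ} (hA : 0 ≤ A) (hB : 0 ≤ B)
    (hc : 0 ≤ c) (hθ : 0 < θ) (h : A ≤ c * (A ^ (1 - θ) * B ^ θ)) : A ≤ c ^ θ⁻¹ * B := by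
  rcases hA.eq_or_lt with rfl | hA
  · positivity
  have hAθ : A ^ θ ≤ c * B ^ θ := by
    refine le_of_mul_le_mul_left ?_ (Real.rpow_pos_of_pos hA (1 - θ))
    calc A ^ (1 - θ) * A ^ θ = A := by rw [← Real.rpow_add hA, sub_add_cancel, Real.rpow_one]
      _ ≤ c * (A ^ (1 - θ) * B ^ θ) := h
      _ = A ^ (1 - θ) * (c * B ^ θ) := by ring
  calc A = (A ^ θ) ^ θ⁻¹ := (Real.rpow_rpow_inv hA.le hθ.ne').symm
    _ ≤ (c * B ^ θ) ^ θ⁻¹ := by gcongr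
    _ = c ^ θ⁻¹ * B := by rw [Real.mul_rpow hc (by positivity), Real.rpow_rpow_inv hB hθ.ne']

theorem poincare_lem_general {Ω : Type*} [MeasurableSpace Ω] (P : Measure Ω)
    (p : ℝ) (hp : 2 ≤ p) (F : Ω → ℝ)
    (hFp : Integrable (fun ω => |F ω| ^ p) P)
    (Γ : Ω → ℝ)
    (hΓp : Integrable (fun ω => |Γ ω| ^ (p / 2)) P)
    (hibp : ∫ ω, |F ω| ^ p ∂P = (p - 1) * ∫ ω, |F ω| ^ (p - 2) * Γ ω ∂P) :
    ∫ ω, |F ω| ^ p ∂P ≤ (p - 1) ^ (p / 2) * ∫ ω, |Γ ω| ^ (p / 2) ∂P := by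
  have hΓ : ∫ ω, |F ω| ^ (p - 2) * Γ ω ∂P ≤ ∫ ω, |F ω| ^ (p - 2) * |Γ ω| ∂P := by
    refine (le_abs_self _).trans (abs_integral_le_integral_abs.trans_eq ?_)
    simp only [abs_mul, abs_of_nonneg (Real.rpow_nonneg (abs_nonneg _) _)]
  have hHolder := integral_rpow_sub_mul_le two_pos hp (fun ω => abs_nonneg (F ω))
    (fun ω => abs_nonneg (Γ ω)) hFp hΓp
  have habsorb := le_rpow_inv_mul_of_le_mul_rpow_mul_rpow
    (integral_nonneg fun _ => by positivity) (integral_nonneg fun _ => by positivity)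
    (by linarith) (by positivity)
    (hibp.trans_le (mul_le_mul_of_nonneg_left (hΓ.trans hHolder) (by linarith)))
  rwa [inv_div] at habsorb

/-- Lemma 4.3 (PoincareLem), a Poincaré-type inequality relative to the operator `Γ`:
if `F` is centered with `E[|F|^p] < ∞`, `Γ` satisfies the stated integrabilities, and the
integration-by-parts identity `E[|F|^p] = (p-1) E[|F|^{p-2} Γ]` holds, then
`E[|F|^p] ≤ (p-1)^{p/2} E[|Γ|^{p/2}]`. (Here `^` is the real power, so that the convention
`|F|⁰ = 1` for `p = 2` holds automatically.) -/
theorem poincare_lem {Ω : Type*} [MeasurableSpace Ω] (P : Measure Ω) [IsProbabilityMeasure P]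
    (p : ℝ) (hp : 2 ≤ p) (F : Ω → ℝ)
    (hFi : Integrable F P) (hFc : ∫ ω, F ω ∂P = 0)
    (hFp : Integrable (fun ω => |F ω| ^ p) P)
    (Γ : Ω → ℝ)
    (hΓp : Integrable (fun ω => |Γ ω| ^ (p / 2)) P)
    (hFΓ : Integrable (fun ω => |F ω| ^ (p - 2) * |Γ ω|) P)
    (hibp : ∫ ω, |F ω| ^ p ∂P = (p - 1) * ∫ ω, |F ω| ^ (p - 2) * Γ ω ∂P) :
    ∫ ω, |F ω| ^ p ∂P ≤ (p - 1) ^ (p / 2) * ∫ ω, |Γ ω| ^ (p / 2) ∂P :=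
  poincare_lem_general P p hp F hFp Γ hΓp hibp
end

section
/- Let F, G : Ω → ℝ^d be integrable centered random vectors on a probability space (Ω, 𝓕, P), and let (Γ^F, Γ^G) be a joint Stein pair without cross terms for (F, G). Let f : ℝ^d → ℝ be a C² function with bounded first and second partial derivatives, and define φ(t) = E[f(√(1−t) G + √t F)] for t ∈ [0,1]. Then φ is differentiable on (0,1) and, for every t ∈ (0,1), φ′(t) = ½ Σ_{i,j=1}^d E[ (∂²f/∂x_i∂x_j)(√(1−t) G + √t F) (Γ^F_{ij} − Γ^G_{ij}) ]. -/
/-!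
Put `Zₜ = √(1-t) G + √t F`. Since `∇f` is bounded and `F`, `G` are integrable, one may
differentiate under the expectation:
`φ'(t) = ∑ₖ E[∂ₖf(Zₜ) (Fₖ / (2√t) - Gₖ / (2√(1-t)))]`.
As `Zₜ` is the image of `(F, G)` under the linear map `(x, y) ↦ √t x + √(1-t) y`, the Stein
identities for the test function `∂ₖf(√t x + √(1-t) y)` give
`E[∂ₖf(Zₜ) Fₖ] = √t ∑ⱼ E[∂ⱼ∂ₖf(Zₜ) ΓFⱼₖ]` and `E[∂ₖf(Zₜ) Gₖ] = √(1-t) ∑ⱼ E[∂ⱼ∂ₖf(Zₜ) ΓGⱼₖ]`,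
and the factors `√t`, `√(1-t)` cancel against the speed of the path, leaving `½`.
-/

open MeasureTheory ProbabilityTheory

open Filter Set

section Integrability

variable {Ω : Type*} [MeasurableSpace Ω] {P : Measure Ω}

lemma MeasureTheory.Integrable.bounded_comp_mul {X : Type*} [TopologicalSpace X] {Y : Ω → ℝ}
    (hY : Integrable Y P) {g : X → ℝ} (hg : Continuous g) {C : ℝ} (hgC : ∀ x, |g x| ≤ C)
    {Z : Ω → X} (hZ : AEStronglyMeasurable Z P) : Integrable (fun ω => g (Z ω) * Y ω) P :=
  hY.bdd_mul (hg.comp_aestronglyMeasurable hZ)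
    (Eventually.of_forall fun _ => (Real.norm_eq_abs _).trans_le (hgC _))

lemma MeasureTheory.Integrable.comp_of_norm_fderiv_le [IsFiniteMeasure P] {E E' : Type*}
    [NormedAddCommGroup E] [NormedSpace ℝ E] [NormedAddCommGroup E'] [NormedSpace ℝ E']
    {Z : Ω → E} (hZ : Integrable Z P) {f : E → E'} (hf : Differentiable ℝ f) {M : ℝ}
    (hM : ∀ x, ‖fderiv ℝ f x‖ ≤ M) : Integrable (fun ω => f (Z ω)) P := by
  refine ((integrable_const ‖f 0‖).add (hZ.norm.const_mul M)).mono'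
    (hf.continuous.comp_aestronglyMeasurable hZ.1) (Eventually.of_forall fun ω => ?_)
  have hlip := convex_univ.norm_image_sub_le_of_norm_fderiv_le (fun x _ => hf x)
    (fun x _ => hM x) (mem_univ 0) (mem_univ (Z ω))
  rw [sub_zero] at hlip
  exact (norm_le_norm_add_norm_sub' _ (f 0)).trans (add_le_add_right hlip _)

end Integrability

section SmartPath

variable {E : Type*} [NormedAddCommGroup E] [NormedSpace ℝ E]

noncomputable def smartPath (x y : E) (s : ℝ) : E := √(1 - s) • y + √s • x

lemma hasDerivAt_smartPath (x y : E) {s : ℝ} (hs : s ∈ Ioo 0 1) :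
    HasDerivAt (smartPath x y) ((2 * √s)⁻¹ • x - (2 * √(1 - s))⁻¹ • y) s := by
  have hy := ((hasDerivAt_id s).const_sub 1).sqrt (sub_pos.2 hs.2).ne'
  have hx := Real.hasDerivAt_sqrt hs.1.ne'
  refine ((hy.smul_const y).add (hx.smul_const x)).congr_deriv ?_
  simp only [id, neg_div, one_div, neg_smul]
  abel

lemma norm_smartPath_deriv_le (x y : E) {t s : ℝ} (ht : t ∈ Ioo 0 1)
    (hs : s ∈ Ioo (t / 2) ((1 + t) / 2)) :
    ‖(2 * √s)⁻¹ • x - (2 * √(1 - s))⁻¹ • y‖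
      ≤ (2 * √(t / 2))⁻¹ * ‖x‖ + (2 * √((1 - t) / 2))⁻¹ * ‖y‖ := by
  obtain ⟨ht0, ht1⟩ := ht
  obtain ⟨hs0, hs1⟩ := hs
  have ht0' : 0 < t / 2 := by linarith
  have ht1' : 0 < (1 - t) / 2 := by linarith
  refine (norm_sub_le _ _).trans ?_
  rw [norm_smul, norm_smul, Real.norm_of_nonneg (by positivity),
    Real.norm_of_nonneg (by positivity)]
  gcongr
  linarith

variable {Ω : Type*} [MeasurableSpace Ω] {P : Measure Ω}

lemma MeasureTheory.Integrable.smartPath {X Y : Ω → E} (hX : Integrable X P)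
    (hY : Integrable Y P) (s : ℝ) : Integrable (fun ω => smartPath (X ω) (Y ω) s) P :=
  (hY.smul _).add (hX.smul _)

theorem hasDerivAt_integral_comp_smartPath [IsFiniteMeasure P] {E' : Type*}
    [NormedAddCommGroup E'] [NormedSpace ℝ E'] [CompleteSpace E'] {f : E → E'}
    (hf : ContDiff ℝ 1 f) {M : ℝ} (hM : ∀ x, ‖fderiv ℝ f x‖ ≤ M) {X Y : Ω → E}
    (hX : Integrable X P) (hY : Integrable Y P) {t : ℝ} (ht : t ∈ Ioo 0 1) :
    HasDerivAt (fun s => ∫ ω, f (smartPath (X ω) (Y ω) s) ∂P)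
      (∫ ω, fderiv ℝ f (smartPath (X ω) (Y ω) t)
        ((2 * √t)⁻¹ • X ω - (2 * √(1 - t))⁻¹ • Y ω) ∂P) t := by
  have hfd : Differentiable ℝ f := hf.differentiable one_ne_zero
  have hM0 : 0 ≤ M := (norm_nonneg _).trans (hM 0)
  have hZ := hX.smartPath hY
  have hV : AEStronglyMeasurable (fun ω => (2 * √t)⁻¹ • X ω - (2 * √(1 - t))⁻¹ • Y ω) P :=
    ((hX.smul _).sub (hY.smul _)).1
  have hbound_int : Integrable (fun ω =>
      M * ((2 * √(t / 2))⁻¹ * ‖X ω‖ + (2 * √((1 - t) / 2))⁻¹ * ‖Y ω‖)) P :=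
    ((hX.norm.const_mul _).add (hY.norm.const_mul _)).const_mul M
  have hnhds : Ioo (t / 2) ((1 + t) / 2) ∈ nhds t :=
    Ioo_mem_nhds (by linarith [ht.1]) (by linarith [ht.2])
  refine (hasDerivAt_integral_of_dominated_loc_of_deriv_le (F' := fun s ω =>
      fderiv ℝ f (smartPath (X ω) (Y ω) s) ((2 * √s)⁻¹ • X ω - (2 * √(1 - s))⁻¹ • Y ω)) hnhds
    (Eventually.of_forall fun s => hf.continuous.comp_aestronglyMeasurable (hZ s).1)
    ((hZ t).comp_of_norm_fderiv_le hfd hM)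
    (isBoundedBilinearMap_apply.continuous.comp_aestronglyMeasurable₂
      ((hf.continuous_fderiv one_ne_zero).comp_aestronglyMeasurable (hZ t).1) hV)
    (Eventually.of_forall fun ω s hs => ?_) hbound_int
    (Eventually.of_forall fun ω s hs => ?_)).2
  · exact (ContinuousLinearMap.le_opNorm _ _).trans
      (mul_le_mul (hM _) (norm_smartPath_deriv_le _ _ ht hs) (norm_nonneg _) hM0)
  · have hs' : s ∈ Ioo 0 1 := ⟨by linarith [hs.1, ht.1], by linarith [hs.2, ht.2]⟩
    exact (hfd _).hasFDerivAt.comp_hasDerivAt s (hasDerivAt_smartPath _ _ hs')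

end SmartPath

section Derivatives

variable {E E' : Type*} [NormedAddCommGroup E] [NormedSpace ℝ E] [NormedAddCommGroup E']
  [NormedSpace ℝ E'] {f : E → E'}

lemma abs_fderiv_apply_le {g : E → ℝ} {M : ℝ} (hM : ∀ x, ‖fderiv ℝ g x‖ ≤ M) (v x : E) :
    |fderiv ℝ g x v| ≤ M * ‖v‖ :=
  (Real.norm_eq_abs _).symm.trans_le
    ((ContinuousLinearMap.le_opNorm _ _).trans (mul_le_mul_of_nonneg_right (hM x) (norm_nonneg v)))

lemma fderiv_fderiv_apply_eq_flip (hf : ContDiff ℝ 2 f) (v x : E) :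
    fderiv ℝ (fun z => fderiv ℝ f z v) x = (fderiv ℝ (fderiv ℝ f) x).flip v := by
  rw [fderiv_clm_apply ((hf.fderiv_right (m := 1) le_rfl).differentiable one_ne_zero x)
    (differentiableAt_const v)]
  simp

lemma fderiv_fderiv_apply_apply (hf : ContDiff ℝ 2 f) (u v x : E) :
    fderiv ℝ (fun z => fderiv ℝ f z v) x u = iteratedFDeriv ℝ 2 f x ![u, v] := by
  simp [fderiv_fderiv_apply_eq_flip hf, iteratedFDeriv_two_apply]

lemma norm_fderiv_fderiv_apply_le (hf : ContDiff ℝ 2 f) {M : ℝ}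
    (hM : ∀ x, ‖iteratedFDeriv ℝ 2 f x‖ ≤ M) (v x : E) :
    ‖fderiv ℝ (fun z => fderiv ℝ f z v) x‖ ≤ M * ‖v‖ := by
  rw [fderiv_fderiv_apply_eq_flip hf]
  refine (ContinuousLinearMap.le_opNorm _ v).trans (mul_le_mul_of_nonneg_right ?_ (norm_nonneg v))
  rw [ContinuousLinearMap.opNorm_flip, ← norm_iteratedFDeriv_one, norm_iteratedFDeriv_fderiv]
  exact hM x

end Derivatives

lemma ContinuousLinearMap.apply_eq_sum_apply_single_mul {ι : Type*} [Fintype ι] [DecidableEq ι]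
    (L : (ι → ℝ) →L[ℝ] ℝ) (v : ι → ℝ) : L v = ∑ k, L (Pi.single k 1) * v k := by
  conv_lhs => rw [pi_eq_sum_univ' v]
  simp [mul_comm]

section Stein

variable {Ω : Type*} [MeasurableSpace Ω] {P : Measure Ω} {d : ℕ} {F G : Ω → Fin d → ℝ}
  {ΓF ΓG : Ω → Fin d → Fin d → ℝ}

theorem IsJointSteinPair.integral_comp_smul_add_smul_mul (hS : IsJointSteinPair P F G ΓF ΓG)
    {g : (Fin d → ℝ) → ℝ} (hg : ContDiff ℝ 1 g) {C C' : ℝ} (hgC : ∀ x, |g x| ≤ C)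
    (hg'C : ∀ x, ‖fderiv ℝ g x‖ ≤ C') (a b : ℝ) (i : Fin d) :
    (∫ ω, g (a • F ω + b • G ω) * F ω i ∂P
      = a * ∑ j, ∫ ω, fderiv ℝ g (a • F ω + b • G ω) (Pi.single j 1) * ΓF ω j i ∂P) ∧
    (∫ ω, g (a • F ω + b • G ω) * G ω i ∂P
      = b * ∑ j, ∫ ω, fderiv ℝ g (a • F ω + b • G ω) (Pi.single j 1) * ΓG ω j i ∂P) := by
  let L : (Fin d → ℝ) × (Fin d → ℝ) →L[ℝ] Fin d → ℝ :=
    a • ContinuousLinearMap.fst ℝ _ _ + b • ContinuousLinearMap.snd ℝ _ _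
  have hgL : ∀ p, fderiv ℝ (g ∘ L) p = (fderiv ℝ g (L p)).comp L := fun p =>
    ((hg.differentiable one_ne_zero _).hasFDerivAt.comp p L.hasFDerivAt).fderiv
  have hgL_bdd : ∀ p, ‖fderiv ℝ (g ∘ L) p‖ ≤ C' * ‖L‖ := fun p => by
    rw [hgL]
    exact (ContinuousLinearMap.opNorm_comp_le _ _).trans (by gcongr; exact hg'C _)
  obtain ⟨hF, hG⟩ := hS.2.2 (g ∘ L) (hg.comp L.contDiff) ⟨C, fun p => hgC _⟩ ⟨_, hgL_bdd⟩ i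
  refine ⟨hF.trans ?_, hG.trans ?_⟩ <;>
  · rw [Finset.mul_sum]
    refine Finset.sum_congr rfl fun j _ => ?_
    rw [← integral_const_mul]
    congr 1 with ω
    rw [hgL]
    simp [L, mul_assoc]

theorem IsJointSteinPair.integral_comp_smartPath_mul (hS : IsJointSteinPair P F G ΓF ΓG)
    (hF : ∀ i, Integrable (fun ω => F ω i) P) (hG : ∀ i, Integrable (fun ω => G ω i) P)
    {g : (Fin d → ℝ) → ℝ} (hg : ContDiff ℝ 1 g) {C C' : ℝ} (hgC : ∀ x, |g x| ≤ C)
    (hg'C : ∀ x, ‖fderiv ℝ g x‖ ≤ C') {t : ℝ} (ht : t ∈ Ioo 0 1) (i : Fin d) :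
    ∫ ω, g (smartPath (F ω) (G ω) t) * ((2 * √t)⁻¹ * F ω i - (2 * √(1 - t))⁻¹ * G ω i) ∂P
      = 2⁻¹ * ∑ j, ∫ ω, fderiv ℝ g (smartPath (F ω) (G ω) t) (Pi.single j 1)
          * (ΓF ω j i - ΓG ω j i) ∂P := by
  obtain ⟨hSF, hSG⟩ := hS.integral_comp_smul_add_smul_mul hg hgC hg'C (√t) (√(1 - t)) i
  have hZ : ∀ ω, smartPath (F ω) (G ω) t = √t • F ω + √(1 - t) • G ω := fun ω => add_comm _ _
  have hZm : AEStronglyMeasurable (fun ω => smartPath (F ω) (G ω) t) P :=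
    ((Integrable.of_eval hF).smartPath (Integrable.of_eval hG) t).1
  have hgZ_int : ∀ {Y : Ω → ℝ}, Integrable Y P →
      Integrable (fun ω => g (smartPath (F ω) (G ω) t) * Y ω) P := fun hY =>
    hY.bounded_comp_mul hg.continuous hgC hZm
  have hg'Z_int : ∀ (j : Fin d) {Γ : Ω → ℝ}, Integrable Γ P →
      Integrable (fun ω => fderiv ℝ g (smartPath (F ω) (G ω) t) (Pi.single j 1) * Γ ω) P :=
    fun j Γ hΓ => hΓ.bounded_comp_mul
      ((hg.continuous_fderiv one_ne_zero).clm_apply continuous_const)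
      (abs_fderiv_apply_le hg'C _) hZm
  have ht0 : √t ≠ 0 := (Real.sqrt_pos.2 ht.1).ne'
  have ht1 : √(1 - t) ≠ 0 := (Real.sqrt_pos.2 (sub_pos.2 ht.2)).ne'
  calc _ = (2 * √t)⁻¹ * ∫ ω, g (smartPath (F ω) (G ω) t) * F ω i ∂P
        - (2 * √(1 - t))⁻¹ * ∫ ω, g (smartPath (F ω) (G ω) t) * G ω i ∂P := by
        rw [← integral_const_mul, ← integral_const_mul,
          ← integral_sub ((hgZ_int (hF i)).const_mul _) ((hgZ_int (hG i)).const_mul _)]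
        congr 1 with ω
        ring
    _ = 2⁻¹ * ∑ j, ((∫ ω, fderiv ℝ g (smartPath (F ω) (G ω) t) (Pi.single j 1) * ΓF ω j i ∂P)
        - ∫ ω, fderiv ℝ g (smartPath (F ω) (G ω) t) (Pi.single j 1) * ΓG ω j i ∂P) := by
        simp only [hZ, hSF, hSG, Finset.sum_sub_distrib]
        field_simp
    _ = _ := by
        congr 1
        refine Finset.sum_congr rfl fun j _ => ?_
        rw [← integral_sub (hg'Z_int j (hS.1 j i)) (hg'Z_int j (hS.2.1 j i))]
        congr 1 with ω
        ring

end Stein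

theorem piterbarg_identity_general {Ω : Type*} [MeasurableSpace Ω] (P : Measure Ω)
    [IsProbabilityMeasure P]
    (d : ℕ) (F G : Ω → Fin d → ℝ)
    (hFi : ∀ i, Integrable (fun ω => F ω i) P)
    (hGi : ∀ i, Integrable (fun ω => G ω i) P)
    (ΓF ΓG : Ω → Fin d → Fin d → ℝ)
    (hstein : IsJointSteinPair P F G ΓF ΓG)
    (f : (Fin d → ℝ) → ℝ) (hf : ContDiff ℝ 2 f)
    (hf1 : ∃ M, ∀ x, ‖fderiv ℝ f x‖ ≤ M)
    (hf2 : ∃ M, ∀ x, ‖iteratedFDeriv ℝ 2 f x‖ ≤ M) :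
    ∀ t ∈ Set.Ioo (0 : ℝ) 1,
      HasDerivAt
        (fun s : ℝ =>
          ∫ ω, f (fun k => Real.sqrt (1 - s) * G ω k + Real.sqrt s * F ω k) ∂P)
        ((1 / 2) * ∑ i, ∑ j,
          ∫ ω, iteratedFDeriv ℝ 2 f
              (fun k => Real.sqrt (1 - t) * G ω k + Real.sqrt t * F ω k)
              ![Pi.single i 1, Pi.single j 1]
            * (ΓF ω i j - ΓG ω i j) ∂P)
        t := by
  intro t ht
  obtain ⟨M₁, hM₁⟩ := hf1
  obtain ⟨M₂, hM₂⟩ := hf2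
  have hF : Integrable F P := Integrable.of_eval hFi
  have hG : Integrable G P := Integrable.of_eval hGi
  refine (hasDerivAt_integral_comp_smartPath (hf.of_le one_le_two) hM₁ hF hG ht).congr_deriv ?_
  have hZm := (hF.smartPath hG t).1
  have hpartial : ∀ k : Fin d, ContDiff ℝ 1 (fun x => fderiv ℝ f x (Pi.single k 1)) := fun k =>
    (hf.fderiv_right (m := 1) le_rfl).clm_apply contDiff_const
  calc _ = ∫ ω, ∑ k, fderiv ℝ f (smartPath (F ω) (G ω) t) (Pi.single k 1)
        * ((2 * √t)⁻¹ * F ω k - (2 * √(1 - t))⁻¹ * G ω k) ∂P := by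
        congr 1 with ω
        rw [ContinuousLinearMap.apply_eq_sum_apply_single_mul]
        simp
    _ = ∑ k, ∫ ω, fderiv ℝ f (smartPath (F ω) (G ω) t) (Pi.single k 1)
        * ((2 * √t)⁻¹ * F ω k - (2 * √(1 - t))⁻¹ * G ω k) ∂P :=
        integral_finsetSum _ fun k _ =>
          (((hFi k).const_mul _).sub ((hGi k).const_mul _)).bounded_comp_mul
            (hpartial k).continuous (abs_fderiv_apply_le hM₁ _) hZm
    _ = ∑ k, 2⁻¹ * ∑ j, ∫ ω, iteratedFDeriv ℝ 2 f (smartPath (F ω) (G ω) t)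
          ![Pi.single j 1, Pi.single k 1] * (ΓF ω j k - ΓG ω j k) ∂P := by
        refine Finset.sum_congr rfl fun k _ => ?_
        simp only [hstein.integral_comp_smartPath_mul hFi hGi (hpartial k)
          (abs_fderiv_apply_le hM₁ _) (norm_fderiv_fderiv_apply_le hf hM₂ _) ht k,
          fderiv_fderiv_apply_apply hf]
    _ = _ := by
        rw [← Finset.mul_sum, Finset.sum_comm, one_div]
        rfl

/-- The extension of Piterbarg's smart-path identity (proof of Theorem 3.1, gs-thm): with
`φ(t) = E[f(√(1-t) G + √t F)]`, the function `φ` is differentiable on `(0,1)` with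
`φ'(t) = ½ ∑ᵢⱼ E[(∂²f/∂xᵢ∂xⱼ)(√(1-t) G + √t F) (ΓFᵢⱼ - ΓGᵢⱼ)]`. -/
theorem piterbarg_identity {Ω : Type*} [MeasurableSpace Ω] (P : Measure Ω)
    [IsProbabilityMeasure P]
    (d : ℕ) (F G : Ω → Fin d → ℝ)
    (hFm : Measurable F) (hGm : Measurable G)
    (hFi : ∀ i, Integrable (fun ω => F ω i) P)
    (hGi : ∀ i, Integrable (fun ω => G ω i) P)
    (hFc : ∀ i, ∫ ω, F ω i ∂P = 0) (hGc : ∀ i, ∫ ω, G ω i ∂P = 0)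
    (ΓF ΓG : Ω → Fin d → Fin d → ℝ)
    (hstein : IsJointSteinPair P F G ΓF ΓG)
    (f : (Fin d → ℝ) → ℝ) (hf : ContDiff ℝ 2 f)
    (hf1 : ∃ M, ∀ x, ‖fderiv ℝ f x‖ ≤ M)
    (hf2 : ∃ M, ∀ x, ‖iteratedFDeriv ℝ 2 f x‖ ≤ M) :
    ∀ t ∈ Set.Ioo (0 : ℝ) 1,
      HasDerivAt
        (fun s : ℝ =>
          ∫ ω, f (fun k => Real.sqrt (1 - s) * G ω k + Real.sqrt s * F ω k) ∂P)
        ((1 / 2) * ∑ i, ∑ j,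
          ∫ ω, iteratedFDeriv ℝ 2 f
              (fun k => Real.sqrt (1 - t) * G ω k + Real.sqrt t * F ω k)
              ![Pi.single i 1, Pi.single j 1]
            * (ΓF ω i j - ΓG ω i j) ∂P)
        t :=
  piterbarg_identity_general P d F G hFi hGi ΓF ΓG hstein f hf hf1 hf2
end
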